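/- Let v1,v2,v3,v4 ∈ ℝ² form a convex quadrilateral in counterclockwise cyclic order, let Q be their convex hull, and let p lie in the interior of Q. Then the 4×4 matrix whose first two rows are the first and second coordinates of (v1,v2,v3,v4), whose third row is (1,1,1,1), and whose fourth row is (ρ1(p), −ρ2(p), ρ3(p), −ρ4(p)), is invertible, and the unique solution of the linear system with right-hand side (p1, p2, 1, 0) is the vector of Wachspress coordinates (φ1(p), φ2(p), φ3(p), φ4(p)). -/

import Mathlib

open Matrix

/-- Signed area of the triangle `(a,b,c)` in the plane. -/
noncomputable def sArea (a b c : EuclideanSpace ℝ (Fin 2)) : ℝ :=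
  ((b 0 - a 0) * (c 1 - a 1) - (b 1 - a 1) * (c 0 - a 0)) / 2

/-- `v` lists the vertices of a convex quadrilateral in counterclockwise cyclic order. -/
def ConvexCCW (v : Fin 4 → EuclideanSpace ℝ (Fin 2)) : Prop :=
  ∀ i : Fin 4, 0 < sArea (v i) (v (i + 1)) (v (i + 2))

/-- `hdist v i p`: Euclidean distance from `p` to the line through `v i` and `v (i+1)`. -/
noncomputable def hdist (v : Fin 4 → EuclideanSpace ℝ (Fin 2)) (i : Fin 4)
    (p : EuclideanSpace ℝ (Fin 2)) : ℝ :=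
  Metric.infDist p (affineSpan ℝ {v i, v (i + 1)} : Set (EuclideanSpace ℝ (Fin 2)))

/-- `ρᵢ(p) = l_{i,i-1} l_{i,i+1} h_{i-1}(p) h_i(p)`. -/
noncomputable def rho (v : Fin 4 → EuclideanSpace ℝ (Fin 2)) (i : Fin 4)
    (p : EuclideanSpace ℝ (Fin 2)) : ℝ :=
  ‖v i - v (i - 1)‖ * ‖v i - v (i + 1)‖ * hdist v (i - 1) p * hdist v i p

/-- Wachspress weight `wᵢ(p) = S(v_{i-1},v_i,v_{i+1}) / (S(p,v_{i-1},v_i) S(p,v_i,v_{i+1}))`. -/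
noncomputable def wWach (v : Fin 4 → EuclideanSpace ℝ (Fin 2)) (i : Fin 4)
    (p : EuclideanSpace ℝ (Fin 2)) : ℝ :=
  sArea (v (i - 1)) (v i) (v (i + 1)) /
    (sArea p (v (i - 1)) (v i) * sArea p (v i) (v (i + 1)))

/-- Wachspress coordinate `φᵢ(p) = wᵢ(p) / (w₁(p)+w₂(p)+w₃(p)+w₄(p))`. -/
noncomputable def wach (v : Fin 4 → EuclideanSpace ℝ (Fin 2)) (i : Fin 4)
    (p : EuclideanSpace ℝ (Fin 2)) : ℝ :=
  wWach v i p / (wWach v 0 p + wWach v 1 p + wWach v 2 p + wWach v 3 p)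

/-!
For `p` inside the quadrilateral put `Sᵢ = S(p, vᵢ, vᵢ₊₁) > 0` and `Aᵢ = S(vᵢ₋₁, vᵢ, vᵢ₊₁) > 0`.
The distance from `p` to the `i`-th edge line is `hᵢ(p) = 2 Sᵢ / lᵢ,ᵢ₊₁`, so `ρᵢ = 4 Sᵢ₋₁ Sᵢ`
and `ρᵢ wᵢ = 4 Aᵢ`; the fourth equation is then the identity `A₀ - A₁ + A₂ - A₃ = 0`, valid for
any four points. The first two equations are the linear precision `∑ wᵢ (vᵢ - p) = 0` of the
Wachspress weights, a polynomial identity once the denominators are cleared. Expanding the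
determinant along the last row gives `-2 ∑ ρᵢ Tᵢ`, where `Tᵢ > 0` is the area of the triangle
formed by the three vertices other than `vᵢ`.
-/

open Topology

lemma sArea_rotate (a b c : EuclideanSpace ℝ (Fin 2)) : sArea a b c = sArea b c a := by
  unfold sArea; ring

lemma sArea_self_left (a c : EuclideanSpace ℝ (Fin 2)) : sArea a a c = 0 := by
  simp [sArea]

lemma sArea_self_right (a b : EuclideanSpace ℝ (Fin 2)) : sArea a b b = 0 := by
  unfold sArea; ring

lemma sArea_sub_sArea_add_sArea_sub_sArea (a b c d : EuclideanSpace ℝ (Fin 2)) :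
    sArea d a b - sArea a b c + sArea b c d - sArea c d a = 0 := by
  unfold sArea; ring

lemma sArea_smul_add_smul (a b x y : EuclideanSpace ℝ (Fin 2)) {s t : ℝ} (hst : s + t = 1) :
    sArea (s • x + t • y) a b = s * sArea x a b + t * sArea y a b := by
  obtain rfl : t = 1 - s := by linarith
  simp only [sArea, PiLp.add_apply, PiLp.smul_apply, smul_eq_mul]
  ring

lemma dist_sq_eq (a b : EuclideanSpace ℝ (Fin 2)) :
    dist a b ^ 2 = (a 0 - b 0) ^ 2 + (a 1 - b 1) ^ 2 := by
  rw [EuclideanSpace.dist_eq, Real.sq_sqrt (by positivity)]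
  simp [Fin.sum_univ_two, Real.dist_eq, sq_abs]

lemma lineMap_apply_coord (a b : EuclideanSpace ℝ (Fin 2)) (r : ℝ) (k : Fin 2) :
    AffineMap.lineMap a b r k = a k + r * (b k - a k) := by
  simp only [AffineMap.lineMap_apply, vsub_eq_sub, vadd_eq_add, PiLp.add_apply, PiLp.smul_apply,
    PiLp.sub_apply, smul_eq_mul]
  ring

lemma two_mul_abs_sArea_le {a b p y : EuclideanSpace ℝ (Fin 2)} (hy : y ∈ line[ℝ, a, b]) :
    2 * |sArea p a b| ≤ dist a b * dist p y := by
  obtain ⟨r, rfl⟩ := mem_affineSpan_pair_iff_exists_lineMap_eq.1 hy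
  rw [← sq_le_sq₀ (by positivity) (by positivity), mul_pow, mul_pow, sq_abs, dist_sq_eq,
    dist_sq_eq, lineMap_apply_coord, lineMap_apply_coord, sArea]
  nlinarith [sq_nonneg ((b 0 - a 0) * (p 0 - a 0 - r * (b 0 - a 0))
    + (b 1 - a 1) * (p 1 - a 1 - r * (b 1 - a 1)))]

lemma exists_mem_affineSpan_pair_two_mul_abs_sArea_eq {a b : EuclideanSpace ℝ (Fin 2)}
    (hab : a ≠ b) (p : EuclideanSpace ℝ (Fin 2)) :
    ∃ y ∈ line[ℝ, a, b], dist a b * dist p y = 2 * |sArea p a b| := by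
  have hd : 0 < dist a b ^ 2 := pow_pos (dist_pos.2 hab) 2
  refine ⟨AffineMap.lineMap a b (((p 0 - a 0) * (b 0 - a 0) + (p 1 - a 1) * (b 1 - a 1))
    / dist a b ^ 2), AffineMap.lineMap_mem_affineSpan_pair _ _ _, ?_⟩
  rw [← sq_eq_sq₀ (by positivity) (by positivity), mul_pow, mul_pow, sq_abs, dist_sq_eq p,
    lineMap_apply_coord, lineMap_apply_coord, sArea]
  rw [dist_sq_eq] at hd ⊢
  field_simp
  ring

lemma infDist_affineSpan_pair {a b : EuclideanSpace ℝ (Fin 2)} (hab : a ≠ b)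
    (p : EuclideanSpace ℝ (Fin 2)) :
    Metric.infDist p line[ℝ, a, b] = 2 * |sArea p a b| / dist a b := by
  have hd : 0 < dist a b := dist_pos.2 hab
  obtain ⟨y, hy, hyp⟩ := exists_mem_affineSpan_pair_two_mul_abs_sArea_eq hab p
  apply le_antisymm
  · rw [le_div_iff₀ hd, ← hyp, mul_comm]
    exact mul_le_mul_of_nonneg_left (Metric.infDist_le_dist_of_mem hy) hd.le
  · rw [Metric.le_infDist ⟨a, left_mem_affineSpan_pair ℝ a b⟩]
    intro z hz
    rw [div_le_iff₀ hd, mul_comm (dist p z)]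
    exact two_mul_abs_sArea_le hz

lemma convex_setOf_sArea_nonneg (a b : EuclideanSpace ℝ (Fin 2)) :
    Convex ℝ {x | 0 ≤ sArea x a b} := by
  intro x hx y hy s t hs ht hst
  rw [Set.mem_ofPred_eq, sArea_smul_add_smul a b x y hst]
  exact add_nonneg (mul_nonneg hs hx) (mul_nonneg ht hy)

lemma sArea_add_smul_normal (a b p : EuclideanSpace ℝ (Fin 2)) (t : ℝ) :
    sArea (p + t • !₂[a 1 - b 1, b 0 - a 0]) a b = sArea p a b + t * dist a b ^ 2 / 2 := by
  simp only [sArea, PiLp.add_apply, PiLp.smul_apply, smul_eq_mul, dist_sq_eq,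
    Matrix.cons_val_zero, Matrix.cons_val_one, Matrix.cons_val_fin_one]
  ring

lemma sArea_pos_of_mem_interior_convexHull {s : Set (EuclideanSpace ℝ (Fin 2))}
    {a b p : EuclideanSpace ℝ (Fin 2)} (hab : a ≠ b) (hs : ∀ x ∈ s, 0 ≤ sArea x a b)
    (hp : p ∈ interior (convexHull ℝ s)) : 0 < sArea p a b := by
  set n : EuclideanSpace ℝ (Fin 2) := !₂[a 1 - b 1, b 0 - a 0]
  have hhull : convexHull ℝ s ⊆ {x | 0 ≤ sArea x a b} :=
    convexHull_min hs (convex_setOf_sArea_nonneg a b)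
  -- `S(·, a, b)` grows along `n`; a small step back from `p` stays in the hull
  have hnear : ∀ᶠ t in 𝓝[<] (0 : ℝ), p + t • n ∈ convexHull ℝ s ∧ t < 0 := by
    have hcont : Filter.Tendsto (fun t : ℝ => p + t • n) (𝓝 0) (𝓝 p) :=
      (by fun_prop : Continuous fun t : ℝ => p + t • n).tendsto' 0 p (by simp)
    exact ((hcont.eventually (mem_interior_iff_mem_nhds.1 hp)).filter_mono
      nhdsWithin_le_nhds).and self_mem_nhdsWithin
  obtain ⟨t, hmem, ht⟩ := hnear.exists
  have hnonneg := hhull hmem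
  rw [Set.mem_ofPred_eq, sArea_add_smul_normal] at hnonneg
  nlinarith [pow_pos (dist_pos.2 hab) 2]

lemma det_vertexMatrix (v : Fin 4 → EuclideanSpace ℝ (Fin 2)) (r : Fin 4 → ℝ) :
    (Matrix.of ![fun i => v i 0, fun i => v i 1, fun _ => (1 : ℝ), r]).det =
      2 * (- r 0 * sArea (v 1) (v 2) (v 3) + r 1 * sArea (v 0) (v 2) (v 3)
        - r 2 * sArea (v 0) (v 1) (v 3) + r 3 * sArea (v 0) (v 1) (v 2)) := by
  rw [det_succ_row_zero]
  simp only [Fin.sum_univ_four, det_fin_three, submatrix_apply, of_apply, Fin.succAbove,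
    Fin.reduceCastSucc, Fin.reduceSucc, Fin.reduceLT, Fin.succ_zero_eq_one, Fin.succ_one_eq_two,
    Fin.castSucc_zero, Fin.castSucc_one, ↓reduceIte, cons_val, Fin.coe_ofNat_eq_mod, sArea]
  ring

namespace ConvexCCW

variable {v : Fin 4 → EuclideanSpace ℝ (Fin 2)}

lemma sArea_pos (h : ConvexCCW v) (i : Fin 4) : 0 < sArea (v (i - 1)) (v i) (v (i + 1)) := by
  simpa [show i - 1 + 2 = i + 1 by abel] using h (i - 1)

lemma ne_succ (h : ConvexCCW v) (i : Fin 4) : v i ≠ v (i + 1) := by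
  intro hi
  have := h i
  rw [hi, sArea_self_left] at this
  exact this.false

lemma sArea_nonneg (h : ConvexCCW v) (i j : Fin 4) : 0 ≤ sArea (v j) (v i) (v (i + 1)) := by
  obtain ⟨k, rfl⟩ : ∃ k, j = i + k := ⟨j - i, by abel⟩
  fin_cases k
  · simp [sArea_self_left]
  · simp [sArea_rotate, sArea_self_right]
  · rw [sArea_rotate]; exact (h i).le
  · simpa [show i + 3 = i - 1 by abel] using (h.sArea_pos i).le

lemma sArea_pos_of_mem_interior (h : ConvexCCW v) {p : EuclideanSpace ℝ (Fin 2)}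
    (hp : p ∈ interior (convexHull ℝ {v 0, v 1, v 2, v 3})) (i : Fin 4) :
    0 < sArea p (v i) (v (i + 1)) :=
  sArea_pos_of_mem_interior_convexHull (h.ne_succ i)
    (by rintro x (rfl | rfl | rfl | rfl) <;> exact h.sArea_nonneg i _) hp

lemma isUnit_vertexMatrix (h : ConvexCCW v) (r : Fin 4 → ℝ) (hr : ∀ i, 0 < r i) :
    IsUnit (Matrix.of ![fun i => v i 0, fun i => v i 1, fun _ => (1 : ℝ),
      ![r 0, -r 1, r 2, -r 3]]) := by
  have h₀ := h.sArea_pos 0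
  have h₁ := h.sArea_pos 1
  have h₂ := h.sArea_pos 2
  have h₃ := h.sArea_pos 3
  simp only [Fin.reduceSub, Fin.reduceAdd] at h₀ h₁ h₂ h₃
  rw [sArea_rotate] at h₀
  rw [← sArea_rotate] at h₃
  rw [Matrix.isUnit_iff_isUnit_det, det_vertexMatrix, isUnit_iff_ne_zero]
  simp only [Matrix.cons_val]
  linarith [mul_pos (hr 0) h₂, mul_pos (hr 1) h₃, mul_pos (hr 2) h₀, mul_pos (hr 3) h₁]

end ConvexCCW

section Weights

variable {v : Fin 4 → EuclideanSpace ℝ (Fin 2)} {p : EuclideanSpace ℝ (Fin 2)}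

lemma hdist_eq (hne : ∀ i, v i ≠ v (i + 1)) (i : Fin 4) :
    hdist v i p = 2 * |sArea p (v i) (v (i + 1))| / dist (v i) (v (i + 1)) :=
  infDist_affineSpan_pair (hne i) p

lemma rho_eq (hne : ∀ i, v i ≠ v (i + 1)) (i : Fin 4) :
    rho v i p = 4 * |sArea p (v (i - 1)) (v i)| * |sArea p (v i) (v (i + 1))| := by
  have h₁ : 0 < dist (v (i - 1)) (v i) := dist_pos.2 (by simpa using hne (i - 1))
  have h₂ : 0 < dist (v i) (v (i + 1)) := dist_pos.2 (hne i)
  rw [rho, hdist_eq hne, hdist_eq hne, sub_add_cancel, ← dist_eq_norm, ← dist_eq_norm,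
    dist_comm (v i)]
  field_simp
  ring

lemma rho_eq_of_sArea_pos (hS : ∀ i, 0 < sArea p (v i) (v (i + 1))) (i : Fin 4) :
    rho v i p = 4 * sArea p (v (i - 1)) (v i) * sArea p (v i) (v (i + 1)) := by
  have hne : ∀ i, v i ≠ v (i + 1) := fun i hi => by
    simpa [hi, sArea_self_right] using hS i
  rw [rho_eq hne, abs_of_pos (by simpa using hS (i - 1)), abs_of_pos (hS i)]

lemma rho_pos (hS : ∀ i, 0 < sArea p (v i) (v (i + 1))) (i : Fin 4) : 0 < rho v i p := by
  rw [rho_eq_of_sArea_pos hS]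
  exact mul_pos (mul_pos four_pos (by simpa using hS (i - 1))) (hS i)

lemma rho_mul_wWach (hS : ∀ i, 0 < sArea p (v i) (v (i + 1))) (i : Fin 4) :
    rho v i p * wWach v i p = 4 * sArea (v (i - 1)) (v i) (v (i + 1)) := by
  have h₁ : sArea p (v (i - 1)) (v i) ≠ 0 := by simpa using (hS (i - 1)).ne'
  have h₂ := (hS i).ne'
  rw [rho_eq_of_sArea_pos hS, wWach]
  field_simp

lemma wWach_pos (h : ConvexCCW v) (hS : ∀ i, 0 < sArea p (v i) (v (i + 1))) (i : Fin 4) :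
    0 < wWach v i p :=
  div_pos (h.sArea_pos i) (mul_pos (by simpa using hS (i - 1)) (hS i))

lemma sum_wWach_mul_sub_eq_zero (hS : ∀ i, sArea p (v i) (v (i + 1)) ≠ 0) (k : Fin 2) :
    ∑ i, wWach v i p * (v i k - p k) = 0 := by
  have h₀ := hS 0
  have h₁ := hS 1
  have h₂ := hS 2
  have h₃ := hS 3
  simp only [Fin.reduceAdd] at h₀ h₁ h₂ h₃
  simp only [Fin.sum_univ_four, wWach, Fin.reduceSub, Fin.reduceAdd]
  field_simp
  unfold sArea
  fin_cases k
  · simp only [Fin.zero_eta]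
    ring
  · simp only [Fin.mk_one]
    ring

lemma wach_eq_div_sum (i : Fin 4) : wach v i p = wWach v i p / ∑ j, wWach v j p := by
  rw [wach, Fin.sum_univ_four]

lemma sum_wach (hW : ∑ j, wWach v j p ≠ 0) : ∑ i, wach v i p = 1 := by
  simp only [wach_eq_div_sum, ← Finset.sum_div, div_self hW]

lemma sum_wach_mul (hS : ∀ i, sArea p (v i) (v (i + 1)) ≠ 0) (hW : ∑ j, wWach v j p ≠ 0)
    (k : Fin 2) : ∑ i, wach v i p * v i k = p k := by
  have hprec := sum_wWach_mul_sub_eq_zero hS k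
  simp only [mul_sub, Finset.sum_sub_distrib, sub_eq_zero] at hprec
  simp only [wach_eq_div_sum, div_mul_eq_mul_div, ← Finset.sum_div, div_eq_iff hW]
  rw [hprec, ← Finset.sum_mul, mul_comm]

lemma alternating_sum_rho_mul_wach (hS : ∀ i, 0 < sArea p (v i) (v (i + 1))) :
    rho v 0 p * wach v 0 p - rho v 1 p * wach v 1 p + rho v 2 p * wach v 2 p
      - rho v 3 p * wach v 3 p = 0 := by
  simp only [wach_eq_div_sum, mul_div_assoc', rho_mul_wWach hS, ← sub_div, ← add_div,
    Fin.reduceSub, Fin.reduceAdd]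
  rw [← mul_sub, ← mul_add, ← mul_sub, sArea_sub_sArea_add_sArea_sub_sArea, mul_zero,
    zero_div]

end Weights

/-- For `p` in the interior of a convex quadrilateral (counterclockwise
order), the 4×4 matrix with rows the two coordinate rows of the vertices, `(1,1,1,1)`,
and `(ρ₁(p), -ρ₂(p), ρ₃(p), -ρ₄(p))` is invertible, and the unique solution of the
system with right-hand side `(p₁, p₂, 1, 0)` is the vector of Wachspress coordinates. -/
theorem wachspress_linear_system (v : Fin 4 → EuclideanSpace ℝ (Fin 2))
    (hccw : ConvexCCW v) (p : EuclideanSpace ℝ (Fin 2))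
    (hp : p ∈ interior (convexHull ℝ {v 0, v 1, v 2, v 3})) :
    IsUnit (Matrix.of ![fun i => v i 0, fun i => v i 1, fun i => (1 : ℝ),
        ![rho v 0 p, -rho v 1 p, rho v 2 p, -rho v 3 p]] : Matrix (Fin 4) (Fin 4) ℝ) ∧
    (Matrix.of ![fun i => v i 0, fun i => v i 1, fun i => (1 : ℝ),
        ![rho v 0 p, -rho v 1 p, rho v 2 p, -rho v 3 p]] :
          Matrix (Fin 4) (Fin 4) ℝ).mulVec (fun i => wach v i p) =
      ![p 0, p 1, 1, 0] := by
  have hS := hccw.sArea_pos_of_mem_interior hp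
  have hSne : ∀ i, sArea p (v i) (v (i + 1)) ≠ 0 := fun i => (hS i).ne'
  have hW : ∑ j, wWach v j p ≠ 0 :=
    (Finset.sum_pos (fun i _ => wWach_pos hccw hS i) Finset.univ_nonempty).ne'
  refine ⟨hccw.isUnit_vertexMatrix (rho v · p) (rho_pos hS), ?_⟩
  ext j
  fin_cases j
  · simpa [Matrix.mulVec, dotProduct, mul_comm] using sum_wach_mul hSne hW 0
  · simpa [Matrix.mulVec, dotProduct, mul_comm] using sum_wach_mul hSne hW 1
  · simpa [Matrix.mulVec, dotProduct] using sum_wach hW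
  · simpa [Matrix.mulVec, dotProduct, Fin.sum_univ_four, sub_eq_add_neg]
      using alternating_sum_rho_mul_wach hS
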